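/- arXiv:2304.08681 — 2 statements merged into one kernel-verified Lean document; each statement's English description precedes it below -/
import Mathlib

section
/- Let p₁ < p₂ < … < p_d be distinct prime numbers. Then the real numbers √p₁, …, √p_d are linearly independent over ℚ; equivalently, the map ℤ^d → ℝ sending n = (n₁,…,n_d) to n₁√p₁ + ⋯ + n_d√p_d is injective. -/
open scoped BigOperators

namespace SqrtPrimesAux

/-- `F [] = ℚ`, `F (p :: l) = {x + y √p | x, y ∈ F l}`. -/
def F : List ℕ → Set ℝ
  | [] => Set.range (fun q : ℚ => (q : ℝ))
  | p :: l => {z | ∃ x ∈ F l, ∃ y ∈ F l, z = x + y * Real.sqrt p}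

lemma ratCast_mem_F (l : List ℕ) : ∀ q : ℚ, (q : ℝ) ∈ F l := by
  induction l with
  | nil => exact fun q => ⟨q, rfl⟩
  | cons p l ih =>
      exact fun q => ⟨(q : ℝ), ih q, 0, by simpa using ih 0, by ring⟩

lemma mem_F_cons_of_mem {l : List ℕ} {p : ℕ} {z : ℝ} (hz : z ∈ F l) : z ∈ F (p :: l) :=
  ⟨z, hz, 0, by simpa using ratCast_mem_F l 0, by ring⟩

lemma sqrt_mem_F {l : List ℕ} {p : ℕ} (hp : p ∈ l) : Real.sqrt p ∈ F l := by
  induction l with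
  | nil => simp at hp
  | cons q l ih =>
      rcases List.mem_cons.mp hp with h | h
      · subst h
        exact ⟨0, by simpa using ratCast_mem_F l 0, 1, by simpa using ratCast_mem_F l 1, by ring⟩
      · exact mem_F_cons_of_mem (ih h)

lemma not_isSquare_of_squarefree {m : ℕ} (hm : Squarefree m) (h1 : 1 < m) : ¬ IsSquare m := by
  rintro ⟨a, rfl⟩
  have h := Nat.isUnit_iff.mp (hm a dvd_rfl)
  rw [h] at h1
  norm_num at h1

/-- Key lemma: `F l` is the carrier of a subfield, and for every squarefree `m > 1`
whose prime factors avoid `l`, `√m ∉ F l`. -/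
lemma main : ∀ l : List ℕ, (∀ p ∈ l, p.Prime) → l.Nodup →
    (∃ K : Subfield ℝ, (K : Set ℝ) = F l) ∧
    (∀ m : ℕ, Squarefree m → 1 < m → (∀ q ∈ l, ¬ q ∣ m) → Real.sqrt m ∉ F l) := by
  intro l
  induction l with
  | nil =>
      intro _ _
      constructor
      · refine ⟨{ carrier := F []
                  one_mem' := ⟨1, by norm_num⟩
                  mul_mem' := by rintro a b ⟨q, rfl⟩ ⟨r, rfl⟩; exact ⟨q * r, by push_cast; ring⟩
                  add_mem' := by rintro a b ⟨q, rfl⟩ ⟨r, rfl⟩; exact ⟨q + r, by push_cast; ring⟩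
                  zero_mem' := ⟨0, by norm_num⟩
                  neg_mem' := by rintro a ⟨q, rfl⟩; exact ⟨-q, by push_cast; ring⟩
                  inv_mem' := by rintro a ⟨q, rfl⟩; exact ⟨q⁻¹, by push_cast; ring⟩ }, rfl⟩
      · intro m hm h1 _
        have : Irrational (Real.sqrt m) := by
          rw [irrational_sqrt_natCast_iff]
          exact not_isSquare_of_squarefree hm h1
        exact this
  | cons p l ih =>
      intro hprime hnd
      have hpprime : p.Prime := hprime p List.mem_cons_self
      have hpl : p ∉ l := (List.nodup_cons.mp hnd).1
      obtain ⟨⟨K, hK⟩, hIH2⟩ := ih (fun q hq => hprime q (List.mem_cons_of_mem p hq))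
        (List.nodup_cons.mp hnd).2
      have hmemK : ∀ {x : ℝ}, x ∈ F l ↔ x ∈ K := by
        intro x; rw [← hK]; rfl
      have hsqp_not : Real.sqrt p ∉ F l := by
        refine hIH2 p hpprime.prime.squarefree hpprime.one_lt ?_
        intro q hq hdvd
        exact hpl (((Nat.prime_dvd_prime_iff_eq (hprime q (List.mem_cons_of_mem p hq))
          hpprime).mp hdvd) ▸ hq)
      have hs : Real.sqrt p * Real.sqrt p = (p : ℝ) :=
        Real.mul_self_sqrt (by positivity)
      have hpK : ((p : ℕ) : ℝ) ∈ F l := by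
        have := ratCast_mem_F l (p : ℚ); push_cast at this; exact this
      -- closure of F (p :: l) under inverses
      have hinv : ∀ z ∈ F (p :: l), z⁻¹ ∈ F (p :: l) := by
        rintro z ⟨x, hx, y, hy, rfl⟩
        by_cases hz : x + y * Real.sqrt p = 0
        · rw [hz]; simp only [inv_zero]
          exact mem_F_cons_of_mem (by simpa using ratCast_mem_F l 0)
        have hd : x * x - y * y * (p : ℝ) ≠ 0 := by
          intro hd0
          by_cases hy0 : y = 0
          · have hxx : x * x = 0 := by rw [hy0] at hd0; linarith
            have hx0 : x = 0 := mul_self_eq_zero.mp hxx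
            exact hz (by rw [hx0, hy0]; ring)
          · have h4 : (Real.sqrt p - x / y) * (Real.sqrt p + x / y) = 0 := by
              field_simp
              linear_combination y * y * hs - hd0
            rcases mul_eq_zero.mp h4 with h | h
            · have heq : Real.sqrt p = x / y := by linarith
              exact hsqp_not (heq ▸ hmemK.mpr (K.div_mem (hmemK.mp hx) (hmemK.mp hy)))
            · have heq : Real.sqrt p = -(x / y) := by linarith
              exact hsqp_not (heq ▸ hmemK.mpr (K.neg_mem
                (K.div_mem (hmemK.mp hx) (hmemK.mp hy))))
        have hmul : (x + y * Real.sqrt p) *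
            ((x + (-y) * Real.sqrt p) / (x * x - y * y * (p : ℝ))) = 1 := by
          rw [mul_div_assoc', div_eq_one_iff_eq hd]
          linear_combination (-(y * y)) * hs
        have hzinv := inv_eq_of_mul_eq_one_right hmul
        refine ⟨x / (x * x - y * y * (p : ℝ)), ?_, -y / (x * x - y * y * (p : ℝ)), ?_, ?_⟩
        · exact hmemK.mpr (K.div_mem (hmemK.mp hx) (K.sub_mem
            (K.mul_mem (hmemK.mp hx) (hmemK.mp hx))
            (K.mul_mem (K.mul_mem (hmemK.mp hy) (hmemK.mp hy)) (hmemK.mp hpK))))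
        · exact hmemK.mpr (K.div_mem (K.neg_mem (hmemK.mp hy)) (K.sub_mem
            (K.mul_mem (hmemK.mp hx) (hmemK.mp hx))
            (K.mul_mem (K.mul_mem (hmemK.mp hy) (hmemK.mp hy)) (hmemK.mp hpK))))
        · rw [hzinv]; ring
      constructor
      · refine ⟨{ carrier := F (p :: l)
                  one_mem' := mem_F_cons_of_mem (by simpa using ratCast_mem_F l 1)
                  zero_mem' := mem_F_cons_of_mem (by simpa using ratCast_mem_F l 0)
                  mul_mem' := by
                    rintro a b ⟨x, hx, y, hy, rfl⟩ ⟨u, hu, v, hv, rfl⟩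
                    refine ⟨x * u + y * v * (p : ℝ), hmemK.mpr ?_, x * v + y * u,
                      hmemK.mpr ?_, ?_⟩
                    · exact K.add_mem (K.mul_mem (hmemK.mp hx) (hmemK.mp hu))
                        (K.mul_mem (K.mul_mem (hmemK.mp hy) (hmemK.mp hv)) (hmemK.mp hpK))
                    · exact K.add_mem (K.mul_mem (hmemK.mp hx) (hmemK.mp hv))
                        (K.mul_mem (hmemK.mp hy) (hmemK.mp hu))
                    · linear_combination (y * v) * hs
                  add_mem' := by
                    rintro a b ⟨x, hx, y, hy, rfl⟩ ⟨u, hu, v, hv, rfl⟩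
                    exact ⟨x + u, hmemK.mpr (K.add_mem (hmemK.mp hx) (hmemK.mp hu)),
                      y + v, hmemK.mpr (K.add_mem (hmemK.mp hy) (hmemK.mp hv)), by ring⟩
                  neg_mem' := by
                    rintro a ⟨x, hx, y, hy, rfl⟩
                    exact ⟨-x, hmemK.mpr (K.neg_mem (hmemK.mp hx)),
                      -y, hmemK.mpr (K.neg_mem (hmemK.mp hy)), by ring⟩
                  inv_mem' := hinv }, rfl⟩
      · -- the non-membership statement
        rintro m hm h1 hdvd ⟨x, hx, y, hy, hxy⟩
        have ht : Real.sqrt m * Real.sqrt m = (m : ℝ) :=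
          Real.mul_self_sqrt (by positivity)
        have h2 : (x + y * Real.sqrt p) * (x + y * Real.sqrt p) = (m : ℝ) := by
          rw [← hxy]; exact ht
        by_cases hxy0 : x * y = 0
        · rcases mul_eq_zero.mp hxy0 with h0 | h0
          · -- x = 0 : √m = y √p, so √(m p) = y p ∈ F l
            have hmp : Real.sqrt ((m * p : ℕ) : ℝ) = y * (p : ℝ) := by
              push_cast
              rw [Real.sqrt_mul (by positivity), hxy, h0]
              linear_combination y * hs
            have hcop : Nat.Coprime m p :=
              (hpprime.coprime_iff_not_dvd.mpr (hdvd p List.mem_cons_self)).symm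
            have hsqf : Squarefree (m * p) :=
              (Nat.squarefree_mul hcop).mpr ⟨hm, hpprime.prime.squarefree⟩
            have hlt : 1 < m * p := lt_of_lt_of_le h1 (Nat.le_mul_of_pos_right m hpprime.pos)
            have hdvd' : ∀ q ∈ l, ¬ q ∣ m * p := by
              intro q hq hqd
              have hqp := hprime q (List.mem_cons_of_mem p hq)
              rcases (Nat.Prime.dvd_mul hqp).mp hqd with h | h
              · exact hdvd q (List.mem_cons_of_mem p hq) h
              · exact hpl (((Nat.prime_dvd_prime_iff_eq hqp hpprime).mp h) ▸ hq)
            exact hIH2 (m * p) hsqf hlt hdvd'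
              (hmp ▸ hmemK.mpr (K.mul_mem (hmemK.mp hy) (hmemK.mp hpK)))
          · -- y = 0 : √m = x ∈ F l
            refine hIH2 m hm h1 (fun q hq => hdvd q (List.mem_cons_of_mem p hq)) ?_
            rw [hxy, h0]
            simpa using hx
        · -- x y ≠ 0 : √p ∈ F l, contradiction
          have h2xy : (2 : ℝ) * x * y ≠ 0 := by
            rw [mul_assoc]; exact mul_ne_zero two_ne_zero hxy0
          have heq : Real.sqrt p =
              ((m : ℝ) - x * x - y * y * (p : ℝ)) / (2 * x * y) := by
            rw [eq_div_iff h2xy]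
            linear_combination h2 - y * y * hs
          refine hsqp_not (heq ▸ hmemK.mpr ?_)
          have hmK : ((m : ℕ) : ℝ) ∈ K := by
            have := ratCast_mem_F l (m : ℚ); push_cast at this; exact hmemK.mp this
          have h2K : ((2 : ℚ) : ℝ) ∈ K := hmemK.mp (ratCast_mem_F l 2)
          refine K.div_mem (K.sub_mem (K.sub_mem hmK
            (K.mul_mem (hmemK.mp hx) (hmemK.mp hx)))
            (K.mul_mem (K.mul_mem (hmemK.mp hy) (hmemK.mp hy)) (hmemK.mp hpK)))
            (K.mul_mem (K.mul_mem (by exact_mod_cast h2K) (hmemK.mp hx)) (hmemK.mp hy))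

/-- Core statement: rational combinations of √pⱼ vanish only trivially. -/
lemma core (d : ℕ) (p : Fin d → ℕ) (hp : ∀ j, (p j).Prime) (hinj : Function.Injective p)
    (c : Fin d → ℚ) (h : ∑ j, (c j : ℝ) * Real.sqrt (p j) = 0) : ∀ k, c k = 0 := by
  intro k
  by_contra hck
  set l : List ℕ := ((List.finRange d).filter (fun j => j ≠ k)).map p with hl
  have hlprime : ∀ q ∈ l, q.Prime := by
    intro q hq
    rcases List.mem_map.mp hq with ⟨j, _, rfl⟩
    exact hp j
  have hlnd : l.Nodup := by
    exact List.Nodup.map hinj (List.Nodup.filter _ (List.nodup_finRange d))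
  obtain ⟨⟨K, hK⟩, h2⟩ := main l hlprime hlnd
  have hmemK : ∀ {x : ℝ}, x ∈ F l ↔ x ∈ K := by
    intro x; rw [← hK]; rfl
  have hterm : ∀ j ∈ Finset.univ.erase k, (c j : ℝ) * Real.sqrt (p j) ∈ K := by
    intro j hj
    have hjk : j ≠ k := (Finset.mem_erase.mp hj).1
    have hpj : p j ∈ l := by
      refine List.mem_map.mpr ⟨j, ?_, rfl⟩
      simp [List.mem_filter, hjk]
    exact K.mul_mem (SubfieldClass.ratCast_mem K (c j)) (hmemK.mp (sqrt_mem_F hpj))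
  have hsum : (c k : ℝ) * Real.sqrt (p k) +
      ∑ j ∈ Finset.univ.erase k, (c j : ℝ) * Real.sqrt (p j) = 0 := by
    have := Finset.add_sum_erase Finset.univ
      (fun j => (c j : ℝ) * Real.sqrt (p j)) (Finset.mem_univ k)
    rw [h] at this
    exact this
  have hckR : ((c k : ℝ)) ≠ 0 := by exact_mod_cast hck
  have heq : Real.sqrt (p k) =
      (c k : ℝ)⁻¹ * (-(∑ j ∈ Finset.univ.erase k, (c j : ℝ) * Real.sqrt (p j))) := by
    field_simp
    linarith [hsum]
  have hmem : Real.sqrt (p k) ∈ F l := by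
    rw [heq]
    exact hmemK.mpr (K.mul_mem (K.inv_mem (SubfieldClass.ratCast_mem K (c k)))
      (K.neg_mem (K.sum_mem hterm)))
  refine h2 (p k) (hp k).prime.squarefree (hp k).one_lt ?_ hmem
  intro q hq hqd
  rcases List.mem_map.mp hq with ⟨j, hj, rfl⟩
  have hjk : j ≠ k := by
    have := (List.mem_filter.mp hj).2
    simpa using this
  have := (Nat.prime_dvd_prime_iff_eq (hp j) (hp k)).mp hqd
  exact hjk (hinj this)

end SqrtPrimesAux

theorem sqrt_primes_linearIndependent_and_int_comb_injective
    (d : ℕ) (p : Fin d → ℕ) (hp : ∀ j, (p j).Prime) (hmono : StrictMono p) :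
    LinearIndependent ℚ (fun j : Fin d => Real.sqrt (p j)) ∧
      Function.Injective
        (fun n : Fin d → ℤ => ∑ j, (n j : ℝ) * Real.sqrt (p j)) := by
  have hinj := hmono.injective
  constructor
  · rw [Fintype.linearIndependent_iff]
    intro g hg
    refine SqrtPrimesAux.core d p hp hinj g ?_
    simpa [Rat.smul_def] using hg
  · intro n m hnm
    simp only at hnm
    funext j
    have hz : ∑ j, ((((n j : ℚ) - (m j : ℚ)) : ℚ) : ℝ) * Real.sqrt (p j) = 0 := by
      push_cast
      simp only [sub_mul]
      rw [Finset.sum_sub_distrib]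
      rw [hnm]
      ring
    have h0 := SqrtPrimesAux.core d p hp hinj (fun i => (n i : ℚ) - (m i : ℚ)) hz j
    have : (n j : ℚ) = (m j : ℚ) := by
      have := sub_eq_zero.mp h0
      exact_mod_cast this
    exact_mod_cast this
end

section
/- Let k be a positive integer and let A ⊆ ℤ^d be a finite set all of whose points n satisfy |n_j| < k/2 for every coordinate j. Then A is centrally symmetric (A = −A) if and only if σ_A(ξ₁/k, …, ξ_d/k) is a real number for every integer point ξ = (ξ₁,…,ξ_d) ∈ ℤ^d. -/
open scoped BigOperators Pointwise

/-- The integer point transform of a finite set `S ⊆ ℤ^d`,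
`σ_S(ξ) := ∑_{n ∈ S} exp(2πi⟨n,ξ⟩)`. -/
noncomputable def intPointTransform {d : ℕ} (S : Finset (Fin d → ℤ)) (ξ : Fin d → ℝ) : ℂ :=
  ∑ n ∈ S, Complex.exp (2 * Real.pi * Complex.I * ∑ j, (n j : ℂ) * (ξ j : ℂ))

noncomputable def Ek (k : ℕ) (x : ℤ) : ℂ :=
  Complex.exp (2 * Real.pi * Complex.I * x / k)

lemma Ek_add (k : ℕ) (x y : ℤ) : Ek k (x + y) = Ek k x * Ek k y := by
  rw [Ek, Ek, Ek, ← Complex.exp_add]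
  congr 1
  push_cast
  ring

lemma Ek_conj (k : ℕ) (x : ℤ) : (starRingEnd ℂ) (Ek k x) = Ek k (-x) := by
  rw [Ek, Ek, ← Complex.exp_conj]
  congr 1
  simp [map_div₀, Complex.conj_I, map_ofNat]

lemma Ek_orth (k : ℕ) (hk : 0 < k) (x : ℤ) (hx : |x| < k) :
    ∑ i ∈ Finset.range k, Ek k (x * i) = if x = 0 then (k : ℂ) else 0 := by
  have hpow : ∀ i : ℕ, Ek k (x * i) = (Ek k x) ^ i := by
    intro i
    rw [Ek, Ek, ← Complex.exp_nat_mul]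
    congr 1
    push_cast
    ring
  by_cases h0 : x = 0
  · subst h0
    simp [Ek]
  · simp only [h0, if_false]
    simp_rw [hpow]
    have hne : Ek k x ≠ 1 := by
      rw [Ek, Ne, Complex.exp_eq_one_iff]
      rintro ⟨n, hn⟩
      have hkne : (k : ℂ) ≠ 0 := by exact_mod_cast hk.ne'
      have hI : Complex.I ≠ 0 := Complex.I_ne_zero
      have hpi : (Real.pi : ℂ) ≠ 0 := by exact_mod_cast Real.pi_ne_zero
      have hx' : (x : ℂ) = n * k := by
        field_simp at hn
        have h2 : (2 * (Real.pi : ℂ) * Complex.I) ≠ 0 := by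
          exact mul_ne_zero (mul_ne_zero two_ne_zero hpi) hI
        apply mul_left_cancel₀ h2
        linear_combination (2 * (Real.pi : ℂ) * Complex.I) * hn
      have hxz : x = n * k := by exact_mod_cast hx'
      have hn0 : n ≠ 0 := by
        rintro rfl; simp at hxz; exact h0 hxz
      have : (k : ℤ) ≤ |x| := by
        rw [hxz, abs_mul, abs_of_nonneg (by positivity : (0:ℤ) ≤ (k:ℤ))]
        nlinarith [Int.one_le_abs hn0]
      omega
    have hpk : Ek k x ^ k = 1 := by
      rw [← hpow, Ek]
      have : (2 * Real.pi * Complex.I * (x * k : ℤ) / k) = x * (2 * Real.pi * Complex.I) := by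
        have hkne : (k : ℂ) ≠ 0 := by exact_mod_cast hk.ne'
        push_cast
        field_simp
      rw [this]
      exact Complex.exp_int_mul_two_pi_mul_I x
    rw [geom_sum_eq hne, hpk]
    simp


lemma Ek_orthd (d k : ℕ) (hk : 0 < k) (n m : Fin d → ℤ)
    (hn : ∀ j, 2 * |n j| < (k : ℤ)) (hm : ∀ j, 2 * |m j| < (k : ℤ)) :
    ∑ ξ ∈ Fintype.piFinset (fun _ : Fin d => Finset.range k),
      Ek k (∑ j, (n j - m j) * (ξ j : ℤ)) = if n = m then (k : ℂ) ^ d else 0 := by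
  have hsplit : ∀ ξ : Fin d → ℕ,
      Ek k (∑ j, (n j - m j) * (ξ j : ℤ)) = ∏ j, Ek k ((n j - m j) * (ξ j : ℤ)) := by
    intro ξ
    unfold Ek
    rw [← Complex.exp_sum]
    congr 1
    push_cast
    rw [Finset.mul_sum, Finset.sum_div]
  rw [Finset.sum_congr rfl (fun ξ _ => hsplit ξ),
    Finset.sum_prod_piFinset (Finset.range k) (fun j (i : ℕ) => Ek k ((n j - m j) * (i : ℤ)))]
  have hterm : ∀ j, ∑ i ∈ Finset.range k, Ek k ((n j - m j) * (i : ℤ))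
      = if n j - m j = 0 then (k : ℂ) else 0 := by
    intro j
    apply Ek_orth k hk
    have h1 := hn j
    have h2 := hm j
    have h3 : |n j - m j| ≤ |n j| + |m j| := abs_sub _ _
    linarith
  rw [Finset.prod_congr rfl (fun j _ => hterm j)]
  by_cases h : n = m
  · subst h
    simp
  · have : ∃ j, n j ≠ m j := by
      by_contra hc
      push_neg at hc
      exact h (funext hc)
    obtain ⟨j, hj⟩ := this
    rw [if_neg h]
    exact Finset.prod_eq_zero (Finset.mem_univ j) (if_neg (sub_ne_zero.mpr hj))

lemma transform_eq (d k : ℕ) (B : Finset (Fin d → ℤ)) (ξ : Fin d → ℤ) :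
    intPointTransform B (fun j => (ξ j : ℝ) / (k : ℝ)) = ∑ n ∈ B, Ek k (∑ j, n j * ξ j) := by
  unfold intPointTransform Ek
  refine Finset.sum_congr rfl fun n _ => ?_
  congr 1
  push_cast
  rw [mul_div_assoc, Finset.sum_div]
  congr 1
  exact Finset.sum_congr rfl fun j _ => (mul_div_assoc _ _ _).symm

lemma conj_transform (d k : ℕ) (A : Finset (Fin d → ℤ)) (ξ : Fin d → ℤ) :
    (starRingEnd ℂ) (∑ n ∈ A, Ek k (∑ j, n j * ξ j)) = ∑ n ∈ -A, Ek k (∑ j, n j * ξ j) := by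
  rw [map_sum, Finset.sum_neg_index]
  refine Finset.sum_congr rfl fun n _ => ?_
  rw [Ek_conj]
  congr 1
  simp [Finset.sum_neg_distrib, neg_mul]

theorem centrally_symmetric_iff_real_at_rational_points
    (d : ℕ) (k : ℕ) (hk : 0 < k) (A : Finset (Fin d → ℤ))
    (hA : ∀ n ∈ A, ∀ j, 2 * |n j| < (k : ℤ)) :
    A = -A ↔ ∀ ξ : Fin d → ℤ,
      (intPointTransform A (fun j => (ξ j : ℝ) / (k : ℝ))).im = 0 := by
  constructor
  · intro hsym ξ
    rw [← Complex.conj_eq_iff_im, transform_eq, conj_transform, ← hsym]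
  · intro h
    have key : ∀ ξ : Fin d → ℤ,
        ∑ n ∈ A, Ek k (∑ j, n j * ξ j) = ∑ n ∈ -A, Ek k (∑ j, n j * ξ j) := by
      intro ξ
      rw [← conj_transform]
      have hh := h ξ
      rw [transform_eq] at hh
      exact (Complex.conj_eq_iff_im.mpr hh).symm
    have hA' : ∀ n ∈ -A, ∀ j, 2 * |n j| < (k : ℤ) := by
      intro n hn j
      have hmem : -n ∈ A := by
        rwa [Finset.mem_neg'] at hn
      have := hA _ hmem j
      simpa using this
    ext m
    by_cases hb : ∀ j, 2 * |m j| < (k : ℤ)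
    · have calcB : ∀ B : Finset (Fin d → ℤ), (∀ n ∈ B, ∀ j, 2 * |n j| < (k : ℤ)) →
          ∑ ξ ∈ Fintype.piFinset (fun _ : Fin d => Finset.range k),
            (∑ n ∈ B, Ek k (∑ j, n j * (ξ j : ℤ))) * Ek k (-∑ j, m j * (ξ j : ℤ))
            = if m ∈ B then (k : ℂ) ^ d else 0 := by
        intro B hB
        have hstep : ∀ ξ ∈ Fintype.piFinset (fun _ : Fin d => Finset.range k),
            (∑ n ∈ B, Ek k (∑ j, n j * (ξ j : ℤ))) * Ek k (-∑ j, m j * (ξ j : ℤ))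
              = ∑ n ∈ B, Ek k (∑ j, (n j - m j) * (ξ j : ℤ)) := by
          intro ξ _
          rw [Finset.sum_mul]
          refine Finset.sum_congr rfl fun n _ => ?_
          rw [← Ek_add]
          congr 1
          simp only [sub_mul, Finset.sum_sub_distrib]
          ring
        rw [Finset.sum_congr rfl hstep, Finset.sum_comm]
        rw [Finset.sum_congr rfl fun n hn => Ek_orthd d k hk n m (hB n hn) hb]
        simp
      have h1 := calcB A hA
      have h2 := calcB (-A) hA'
      have heq : (if m ∈ A then (k : ℂ) ^ d else 0) = if m ∈ -A then (k : ℂ) ^ d else 0 := by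
        rw [← h1, ← h2]
        refine Finset.sum_congr rfl fun ξ _ => ?_
        rw [key (fun j => (ξ j : ℤ))]
      have hkd : ((k : ℂ)) ^ d ≠ 0 := pow_ne_zero _ (Nat.cast_ne_zero.mpr hk.ne')
      by_cases h3 : m ∈ A <;> by_cases h4 : m ∈ -A
      · exact iff_of_true h3 h4
      · rw [if_pos h3, if_neg h4] at heq
        exact absurd heq hkd
      · rw [if_neg h3, if_pos h4] at heq
        exact absurd heq.symm hkd
      · exact iff_of_false h3 h4
    · constructor
      · intro hm
        exact absurd (hA m hm) hb
      · intro hm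
        exact absurd (hA' m hm) hb
end
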